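/- Let p be an odd prime and n ≥ 1. Every family v : Fin ((h (Nat.log 2 ((p-1)/2)) n) ^ Nat.clog 2 p) → (Fin n → ZMod p) admits a nonempty zero-sum subsequence, i.e., a nonempty finite subset B of indices with Σ_{i∈B} v i = 0. -/

import Mathlib

/-- The sequence of coefficient bounds: `d 0 = (p-1)/2`, `d (i+1) = d i / 2`. -/
def dSeq (p : ℕ) : ℕ → ℕ
  | 0 => (p - 1) / 2
  | i + 1 => dSeq p i / 2

/-- The sequence of lengths: `h 0 m = m + 1`,
`h (i+1) m = h i m * h i (⌈d i / 2⌉ * m)`. -/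
def hSeq (p : ℕ) : ℕ → ℕ → ℕ
  | 0, m => m + 1
  | i + 1, m => hSeq p i m * hSeq p i (((dSeq p i + 1) / 2) * m)

open MvPolynomial Finset

lemma davenport {p : ℕ} (hp : p.Prime) {N n : ℕ} (hN : n * (p - 1) < N)
    (v : Fin N → Fin n → ZMod p) :
    ∃ B : Finset (Fin N), B.Nonempty ∧ ∑ i ∈ B, v i = 0 := by
  haveI : Fact p.Prime := ⟨hp⟩
  set f : Fin n → MvPolynomial (Fin N) (ZMod p) :=
    fun j => ∑ i, C (v i j) * X i ^ (p - 1) with hf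
  have hdeg : ∀ j, (f j).totalDegree ≤ p - 1 := by
    intro j
    refine (totalDegree_finset_sum _ _).trans (Finset.sup_le fun i _ => ?_)
    calc (C (v i j) * X i ^ (p - 1)).totalDegree
        ≤ (C (v i j)).totalDegree + (X i ^ (p - 1) : MvPolynomial (Fin N) (ZMod p)).totalDegree :=
          totalDegree_mul _ _
      _ ≤ 0 + (p - 1) := add_le_add (by simp) ((totalDegree_pow _ _).trans (by simp))
      _ = p - 1 := by omega
  have hsum : (∑ j, (f j).totalDegree) < Fintype.card (Fin N) := by
    rw [Fintype.card_fin]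
    calc (∑ j : Fin n, (f j).totalDegree) ≤ ∑ j : Fin n, (p - 1) :=
          Finset.sum_le_sum fun j _ => hdeg j
      _ = n * (p - 1) := by simp [mul_comm]
      _ < N := hN
  have hdvd := char_dvd_card_solutions_of_fintype_sum_lt p hsum
  have hzero : ∀ j, eval (0 : Fin N → ZMod p) (f j) = 0 := by
    intro j
    simp only [hf, map_sum, map_mul, map_pow, eval_C, eval_X]
    have : p - 1 ≠ 0 := by have := hp.two_le; omega
    simp [zero_pow this]
  have hpos : 0 < Fintype.card { x : Fin N → ZMod p // ∀ j, eval x (f j) = 0 } :=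
    Fintype.card_pos_iff.mpr ⟨⟨0, hzero⟩⟩
  have hcard : 1 < Fintype.card { x : Fin N → ZMod p // ∀ j, eval x (f j) = 0 } := by
    have hp2 := hp.two_le
    have : p ≤ Fintype.card { x : Fin N → ZMod p // ∀ j, eval x (f j) = 0 } :=
      Nat.le_of_dvd hpos (by convert hdvd)
    omega
  obtain ⟨⟨x, hx⟩, hne⟩ := Fintype.exists_ne_of_one_lt_card hcard ⟨0, hzero⟩
  have hxne : x ≠ 0 := fun h => hne (by simp [h])
  refine ⟨Finset.univ.filter (fun i => x i ≠ 0), ?_, ?_⟩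
  · obtain ⟨i, hi⟩ := Function.ne_iff.mp hxne
    exact ⟨i, by simpa using hi⟩
  · funext j
    have h1 : ∀ i : Fin N, x i ≠ 0 → x i ^ (p - 1) = 1 :=
      fun i hi => ZMod.pow_card_sub_one_eq_one hi
    have : ∑ i ∈ Finset.univ.filter (fun i => x i ≠ 0), v i j
        = eval x (f j) := by
      simp only [hf, map_sum, map_mul, map_pow, eval_C, eval_X]
      rw [← Finset.sum_filter_add_sum_filter_not Finset.univ (fun i => x i ≠ 0)
        (fun i => v i j * x i ^ (p - 1))]
      have hz : ∀ i ∈ Finset.univ.filter (fun i => ¬ x i ≠ 0),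
          v i j * x i ^ (p - 1) = 0 := by
        intro i hi
        simp only [Finset.mem_filter, not_not] at hi
        have : p - 1 ≠ 0 := by have := hp.two_le; omega
        simp [hi.2, zero_pow this]
      rw [Finset.sum_eq_zero hz, add_zero]
      exact Finset.sum_congr rfl fun i hi => by
        rw [h1 i (Finset.mem_filter.mp hi).2, mul_one]
    rw [Finset.sum_apply, this, hx j, Pi.zero_apply]

lemma dSeq_eq (p : ℕ) : ∀ i, dSeq p i = (p - 1) / 2 / 2 ^ i
  | 0 => by simp [dSeq]
  | i + 1 => by
      rw [dSeq, dSeq_eq p i, Nat.div_div_eq_div_mul, pow_succ]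

lemma hSeq_ge (p : ℕ) : ∀ i, (∀ k < i, 1 ≤ dSeq p k) → ∀ m,
    m * 2 ^ i + 1 ≤ hSeq p i m
  | 0, _, m => by simp [hSeq]
  | i + 1, hd, m => by
      have h1 := hSeq_ge p i (fun k hk => hd k (by omega)) m
      have h2 := hSeq_ge p i (fun k hk => hd k (by omega)) (((dSeq p i + 1) / 2) * m)
      have hc : 1 ≤ (dSeq p i + 1) / 2 := by
        have := hd i (by omega); omega
      have h3 : m * 2 ^ i + 1 ≤ ((dSeq p i + 1) / 2) * m * 2 ^ i + 1 := by
        have : m * 2 ^ i ≤ ((dSeq p i + 1) / 2) * m * 2 ^ i :=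
          Nat.mul_le_mul_right _ (Nat.le_mul_of_pos_left m hc)
        omega
      rw [hSeq, pow_succ]
      calc m * (2 ^ i * 2) + 1 ≤ (m * 2 ^ i + 1) * (m * 2 ^ i + 1) := by nlinarith
        _ ≤ _ := Nat.mul_le_mul h1 (le_trans h3 h2)

lemma key_numeric (p : ℕ) (hp : p.Prime) (hodd : Odd p) (n : ℕ) (hn : 1 ≤ n) :
    n * (p - 1) < (hSeq p (Nat.log 2 ((p - 1) / 2)) n) ^ Nat.clog 2 p := by
  set d0 := (p - 1) / 2 with hd0
  set L := Nat.log 2 d0 with hL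
  set K := Nat.clog 2 p with hK
  have hp3 : 3 ≤ p := by
    have h2 := hp.two_le
    rcases hodd with ⟨k, hk⟩
    omega
  have hd0pos : 1 ≤ d0 := by
    rw [hd0]; omega
  have h2d0 : 2 * d0 = p - 1 := by
    rcases hodd with ⟨k, hk⟩; omega
  -- hSeq lower bound
  have hds : ∀ k < L, 1 ≤ dSeq p k := by
    intro k hk
    rw [dSeq_eq, ← hd0, Nat.one_le_div_iff (by positivity)]
    calc (2:ℕ) ^ k ≤ 2 ^ L := Nat.pow_le_pow_right (by norm_num) hk.le
      _ ≤ d0 := Nat.pow_log_le_self 2 (by omega)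
  have hH : n * 2 ^ L + 1 ≤ hSeq p L n := hSeq_ge p L hds n
  -- K * 2^L ≥ p - 1
  have hpowle : 2 ^ L ≤ d0 := Nat.pow_log_le_self 2 (by omega)
  have hlt : d0 < 2 ^ (L + 1) := Nat.lt_pow_succ_log_self (by norm_num) d0
  have hKL : L + 2 ≤ K := by
    have : 2 ^ (L + 1) < p := by
      have : 2 ^ (L + 1) = 2 * 2 ^ L := by ring
      omega
    exact (Nat.lt_clog_iff_pow_lt (by norm_num)).mpr this
  have haux : 2 ^ (L + 2) - 2 ≤ (L + 2) * 2 ^ L := by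
    match L with
    | 0 => decide
    | 1 => decide
    | (l + 2) =>
      have h1 : (2:ℕ) ^ (l + 2 + 2) = 4 * 2 ^ (l + 2) := by ring
      have h2 : 4 * 2 ^ (l + 2) ≤ (l + 2 + 2) * 2 ^ (l + 2) :=
        Nat.mul_le_mul_right _ (by omega)
      omega
  have hK2 : p - 1 ≤ K * 2 ^ L := by
    have h1 : p - 1 ≤ 2 ^ (L + 2) - 2 := by
      have : 2 ^ (L + 2) = 2 * 2 ^ (L + 1) := by ring
      omega
    have h2 : (L + 2) * 2 ^ L ≤ K * 2 ^ L := Nat.mul_le_mul_right _ hKL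
    omega
  -- Bernoulli
  have hbern : 1 + K * (n * 2 ^ L) ≤ (1 + n * 2 ^ L) ^ K :=
    one_add_mul_le_pow_of_sq_nonneg (by positivity) (by positivity) (by positivity) K
  calc n * (p - 1) < 1 + n * (p - 1) := by omega
    _ ≤ 1 + n * (K * 2 ^ L) := by
        have := Nat.mul_le_mul_left n hK2; omega
    _ = 1 + K * (n * 2 ^ L) := by ring_nf
    _ ≤ (1 + n * 2 ^ L) ^ K := hbern
    _ ≤ (hSeq p L n) ^ K := Nat.pow_le_pow_left (by omega) K

theorem zero_sum_subsequence_odd (p : ℕ) (hp : p.Prime) (hodd : Odd p)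
    (n : ℕ) (hn : 1 ≤ n)
    (v : Fin ((hSeq p (Nat.log 2 ((p - 1) / 2)) n) ^ Nat.clog 2 p) →
      Fin n → ZMod p) :
    ∃ B : Finset (Fin ((hSeq p (Nat.log 2 ((p - 1) / 2)) n) ^ Nat.clog 2 p)),
      B.Nonempty ∧ ∑ i ∈ B, v i = 0 := by
  exact davenport hp (key_numeric p hp hodd n hn) v
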